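/- arXiv:1106.5246 — 5 statements merged into one kernel-verified Lean document; each statement's English description precedes it below -/
import Mathlib

section
/- The map f ↦ L^λ_{X_f} := X_f + λf′ is a representation of the contact Lie superalgebra: for homogeneous Hamiltonians f, g one has [L^λ_{X_f}, L^λ_{X_g}] = L^λ_{X_{{f,g}}}, where {f,g} = fg' - f'g - (-1)^{p(f)}½(D̄₁(f)D̄₁(g) + D̄₂(f)D̄₂(g)). -/
noncomputable section

open Polynomial

/-- The Grassmann algebra `C^∞(S¹)[ξ₁,ξ₂]` (polynomial model in `x`):
an element `f₀ + ξ₁f₁ + ξ₂f₂ + ξ₁ξ₂f₁₂` is encoded by its four components. -/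
abbrev Gr := Polynomial ℂ × Polynomial ℂ × Polynomial ℂ × Polynomial ℂ

namespace Gr

/-- Supercommutative multiplication. -/
def gmul (f g : Gr) : Gr :=
  (f.1 * g.1,
   f.1 * g.2.1 + f.2.1 * g.1,
   f.1 * g.2.2.1 + f.2.2.1 * g.1,
   f.1 * g.2.2.2 + f.2.2.2 * g.1 + f.2.1 * g.2.2.1 - f.2.2.1 * g.2.1)

/-- The even vector field `∂ₓ`. -/
def dX (f : Gr) : Gr :=
  (derivative f.1, derivative f.2.1, derivative f.2.2.1, derivative f.2.2.2)

/-- The left odd derivation `∂_{ξ₁}`. -/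
def dXi1 (f : Gr) : Gr := (f.2.1, 0, f.2.2.2, 0)

/-- The left odd derivation `∂_{ξ₂}`. -/
def dXi2 (f : Gr) : Gr := (f.2.2.1, -f.2.2.2, 0, 0)

def xi1 : Gr := (0, 1, 0, 0)
def xi2 : Gr := (0, 0, 1, 0)
def xi12 : Gr := (0, 0, 0, 1)
def oneG : Gr := (1, 0, 0, 0)
def xG : Gr := (Polynomial.X, 0, 0, 0)

/-- `D̄₁ = ∂_{ξ₁} - ξ₁∂ₓ`. -/
def D1b (f : Gr) : Gr := dXi1 f - gmul xi1 (dX f)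
/-- `D̄₂ = ∂_{ξ₂} - ξ₂∂ₓ`. -/
def D2b (f : Gr) : Gr := dXi2 f - gmul xi2 (dX f)
/-- `D₁ = ∂_{ξ₁} + ξ₁∂ₓ`. -/
def Dp1 (f : Gr) : Gr := dXi1 f + gmul xi1 (dX f)
/-- `D₂ = ∂_{ξ₂} + ξ₂∂ₓ`. -/
def Dp2 (f : Gr) : Gr := dXi2 f + gmul xi2 (dX f)

/-- `f` is homogeneous of parity `p` (`false` = even, `true` = odd). -/
def IsHom (f : Gr) (p : Bool) : Prop :=
  if p then f.1 = 0 ∧ f.2.2.2 = 0 else f.2.1 = 0 ∧ f.2.2.1 = 0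

/-- `(-1)^p`. -/
def sgn (p : Bool) : ℂ := if p then -1 else 1

/-- The contact vector field `X_f = f∂ₓ - (-1)^{p(f)} ½(D̄₁(f)D̄₁ + D̄₂(f)D̄₂)`. -/
def Xv (f : Gr) (p : Bool) (F : Gr) : Gr :=
  gmul f (dX F) - (sgn p * (1/2 : ℂ)) • (gmul (D1b f) (D1b F) + gmul (D2b f) (D2b F))

/-- The Lie derivative `L^λ_{X_f} = X_f + λ f′` on λ-densities. -/
def L (lam : ℂ) (f : Gr) (p : Bool) (F : Gr) : Gr :=
  Xv f p F + lam • gmul (dX f) F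

/-- The contact bracket `{f,g} = fg' - f'g - (-1)^{p(f)} ½(D̄₁(f)D̄₁(g) + D̄₂(f)D̄₂(g))`. -/
def cbr (f : Gr) (p : Bool) (g : Gr) : Gr :=
  gmul f (dX g) - gmul (dX f) g
    - (sgn p * (1/2 : ℂ)) • (gmul (D1b f) (D1b g) + gmul (D2b f) (D2b g))

/-- Generalized binomial coefficient `z(z-1)⋯(z-m+1)/m!`. -/
noncomputable def cbinom (z : ℂ) (m : ℕ) : ℂ :=
  (∏ i ∈ Finset.range m, (z - i)) / (Nat.factorial m)

/-!
Write `L^λ_{X_f} = X_f + λ·f′`. Since `X_f` is a derivation of parity `p(f)` of the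
supercommutative algebra and multiplication operators supercommute, the supercommutator
`[X_f + λf′, X_g + λg′]` equals `[X_f, X_g] + λ·(X_f(g′) - (-1)^{p(f)p(g)} X_g(f′))`,
the `λ²` term cancelling. The first summand is `X_{{f,g}}` by a direct computation in
components, and the second is `λ·{f,g}′`, because `∂ₓ` is an even derivation commuting
with `D̄₁` and `D̄₂`.
-/

theorem sgn_mul_self (p : Bool) : sgn p * sgn p = 1 := by
  cases p <;> norm_num [sgn]

theorem gmul_assoc (a b c : Gr) : gmul (gmul a b) c = gmul a (gmul b c) := by
  simp only [gmul, Prod.mk.injEq]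
  refine ⟨?_, ?_, ?_, ?_⟩ <;> ring

theorem gmul_add (a b c : Gr) : gmul a (b + c) = gmul a b + gmul a c := by
  simp only [gmul, Prod.fst_add, Prod.snd_add, Prod.mk_add_mk, Prod.mk.injEq]
  refine ⟨?_, ?_, ?_, ?_⟩ <;> ring

theorem gmul_sub (a b c : Gr) : gmul a (b - c) = gmul a b - gmul a c := by
  simp only [gmul, Prod.fst_sub, Prod.snd_sub, Prod.mk_sub_mk, Prod.mk.injEq]
  refine ⟨?_, ?_, ?_, ?_⟩ <;> ring

theorem add_gmul (a b c : Gr) : gmul (a + b) c = gmul a c + gmul b c := by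
  simp only [gmul, Prod.fst_add, Prod.snd_add, Prod.mk_add_mk, Prod.mk.injEq]
  refine ⟨?_, ?_, ?_, ?_⟩ <;> ring

theorem sub_gmul (a b c : Gr) : gmul (a - b) c = gmul a c - gmul b c := by
  simp only [gmul, Prod.fst_sub, Prod.snd_sub, Prod.mk_sub_mk, Prod.mk.injEq]
  refine ⟨?_, ?_, ?_, ?_⟩ <;> ring

theorem gmul_smul (a b : Gr) (c : ℂ) : gmul a (c • b) = c • gmul a b := by
  simp only [gmul, Prod.smul_fst, Prod.smul_snd, Prod.smul_mk, mul_smul_comm, smul_add, smul_sub]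

theorem smul_gmul (a b : Gr) (c : ℂ) : gmul (c • a) b = c • gmul a b := by
  simp only [gmul, Prod.smul_fst, Prod.smul_snd, Prod.smul_mk, smul_mul_assoc, smul_add, smul_sub]

theorem gmul_comm_of_isHom {a b : Gr} {p q : Bool} (ha : IsHom a p) (hb : IsHom b q) :
    gmul a b = sgn (p && q) • gmul b a := by
  obtain ⟨a0, a1, a2, a3⟩ := a
  obtain ⟨b0, b1, b2, b3⟩ := b
  cases p <;> cases q <;> obtain ⟨rfl, rfl⟩ := ha <;> obtain ⟨rfl, rfl⟩ := hb <;>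
    simp only [gmul, sgn, Bool.and_self, Bool.and_false, Bool.false_and, ite_true, ite_false,
      Bool.false_eq_true, one_smul, neg_smul, Prod.neg_mk, Prod.mk.injEq] <;>
    refine ⟨?_, ?_, ?_, ?_⟩ <;> ring

theorem gmul_left_comm_of_isHom {a b : Gr} {p q : Bool} (ha : IsHom a p) (hb : IsHom b q)
    (c : Gr) : gmul a (gmul b c) = sgn (p && q) • gmul b (gmul a c) := by
  rw [← gmul_assoc, gmul_comm_of_isHom ha hb, smul_gmul, gmul_assoc]

theorem IsHom.dX {f : Gr} {p : Bool} (hf : IsHom f p) : IsHom (dX f) p := by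
  cases p <;> obtain ⟨h₁, h₂⟩ := hf <;> simp [IsHom, Gr.dX, h₁, h₂]

theorem IsHom.D1b {a : Gr} {p : Bool} (ha : IsHom a p) : IsHom (D1b a) (!p) := by
  cases p <;> obtain ⟨h₁, h₂⟩ := ha <;>
    simp [IsHom, Gr.D1b, dXi1, Gr.dX, gmul, xi1, h₁, h₂]

theorem IsHom.D2b {a : Gr} {p : Bool} (ha : IsHom a p) : IsHom (D2b a) (!p) := by
  cases p <;> obtain ⟨h₁, h₂⟩ := ha <;>
    simp [IsHom, Gr.D2b, dXi2, Gr.dX, gmul, xi2, h₁, h₂]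

theorem dX_gmul (a b : Gr) : dX (gmul a b) = gmul (dX a) b + gmul a (dX b) := by
  simp only [dX, gmul, derivative_add, derivative_sub, derivative_mul, Prod.mk_add_mk,
    Prod.mk.injEq, true_and]
  refine ⟨?_, ?_, ?_⟩ <;> ring

theorem D1b_gmul {a : Gr} {q : Bool} (ha : IsHom a q) (b : Gr) :
    D1b (gmul a b) = gmul (D1b a) b + sgn q • gmul a (D1b b) := by
  obtain ⟨a0, a1, a2, a3⟩ := a
  cases q <;> obtain ⟨rfl, rfl⟩ := ha <;>
    simp only [D1b, dXi1, dX, gmul, xi1, sgn, derivative_add, derivative_sub, derivative_mul,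
      Prod.mk_add_mk, Prod.mk_sub_mk, Prod.mk.injEq, ite_true, ite_false,
      Bool.false_eq_true, neg_smul, one_smul, Prod.neg_mk] <;>
    refine ⟨?_, ?_, ?_, ?_⟩ <;> ring

theorem D2b_gmul {a : Gr} {q : Bool} (ha : IsHom a q) (b : Gr) :
    D2b (gmul a b) = gmul (D2b a) b + sgn q • gmul a (D2b b) := by
  obtain ⟨a0, a1, a2, a3⟩ := a
  cases q <;> obtain ⟨rfl, rfl⟩ := ha <;>
    simp only [D2b, dXi2, dX, gmul, xi2, sgn, derivative_add, derivative_sub, derivative_mul,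
      Prod.mk_add_mk, Prod.mk_sub_mk, Prod.mk.injEq, ite_true, ite_false,
      Bool.false_eq_true, neg_smul, one_smul, Prod.neg_mk] <;>
    refine ⟨?_, ?_, ?_, ?_⟩ <;> ring

theorem dX_D1b (a : Gr) : dX (D1b a) = D1b (dX a) := by
  simp [dX, D1b, dXi1, gmul, xi1]

theorem dX_D2b (a : Gr) : dX (D2b a) = D2b (dX a) := by
  simp [dX, D2b, dXi2, gmul, xi2]

theorem dX_isLinearMap : IsLinearMap ℂ dX :=
  ⟨fun F G => by simp [dX], fun c F => by simp [dX]⟩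

theorem dXi1_isLinearMap : IsLinearMap ℂ dXi1 :=
  ⟨fun F G => by ext <;> simp [dXi1], fun c F => by ext <;> simp [dXi1]⟩

theorem dXi2_isLinearMap : IsLinearMap ℂ dXi2 :=
  ⟨fun F G => by ext <;> simp [dXi2]; abel, fun c F => by ext <;> simp [dXi2]⟩

theorem D1b_isLinearMap : IsLinearMap ℂ D1b :=
  ⟨fun F G => by
    simp only [D1b, dXi1_isLinearMap.map_add, dX_isLinearMap.map_add, gmul_add]; abel,
   fun c F => by
    simp only [D1b, dXi1_isLinearMap.map_smul, dX_isLinearMap.map_smul, gmul_smul, smul_sub]⟩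

theorem D2b_isLinearMap : IsLinearMap ℂ D2b :=
  ⟨fun F G => by
    simp only [D2b, dXi2_isLinearMap.map_add, dX_isLinearMap.map_add, gmul_add]; abel,
   fun c F => by
    simp only [D2b, dXi2_isLinearMap.map_smul, dX_isLinearMap.map_smul, gmul_smul, smul_sub]⟩

theorem Xv_isLinearMap (f : Gr) (p : Bool) : IsLinearMap ℂ (Xv f p) := by
  constructor
  · intro F G
    simp only [Xv, dX_isLinearMap.map_add, D1b_isLinearMap.map_add, D2b_isLinearMap.map_add,
      gmul_add]
    module
  · intro c F
    simp only [Xv, dX_isLinearMap.map_smul, D1b_isLinearMap.map_smul, D2b_isLinearMap.map_smul,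
      gmul_smul]
    module

theorem Xv_gmul {f a : Gr} {p q : Bool} (hf : IsHom f p) (ha : IsHom a q) (F : Gr) :
    Xv f p (gmul a F) = gmul (Xv f p a) F + sgn (p && q) • gmul a (Xv f p F) := by
  have hfa : gmul f a = sgn (p && q) • gmul a f := gmul_comm_of_isHom hf ha
  have hD1 : gmul (D1b f) a = sgn (!p && q) • gmul a (D1b f) := gmul_comm_of_isHom hf.D1b ha
  have hD2 : gmul (D2b f) a = sgn (!p && q) • gmul a (D2b f) := gmul_comm_of_isHom hf.D2b ha
  have hs : sgn q * sgn (!p && q) = sgn (p && q) := by cases p <;> cases q <;> norm_num [sgn]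
  simp only [Xv, dX_gmul, D1b_gmul ha, D2b_gmul ha, gmul_add, gmul_smul, gmul_sub, add_gmul,
    sub_gmul, smul_gmul, ← gmul_assoc, hfa, hD1, hD2]
  linear_combination (norm := module) (-(sgn p * (1 / 2))) • hs •
    (gmul (gmul a (D1b f)) (D1b F) + gmul (gmul a (D2b f)) (D2b F))

theorem dX_cbr {f g : Gr} {p q : Bool} (hf : IsHom f p) (hg : IsHom g q) :
    dX (cbr f p g) = Xv f p (dX g) - sgn (p && q) • Xv g q (dX f) := by
  have hg0 : gmul g (dX (dX f)) = sgn (p && q) • gmul (dX (dX f)) g := by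
    rw [Bool.and_comm]; exact gmul_comm_of_isHom hg hf.dX.dX
  have hD1 : gmul (D1b g) (D1b (dX f)) = sgn (!q && !p) • gmul (D1b (dX f)) (D1b g) :=
    gmul_comm_of_isHom hg.D1b hf.dX.D1b
  have hD2 : gmul (D2b g) (D2b (dX f)) = sgn (!q && !p) • gmul (D2b (dX f)) (D2b g) :=
    gmul_comm_of_isHom hg.D2b hf.dX.D2b
  have hs : sgn (p && q) * sgn q * sgn (!q && !p) = -sgn p := by
    cases p <;> cases q <;> norm_num [sgn]
  simp only [cbr, Xv, dX_isLinearMap.map_sub, dX_isLinearMap.map_smul, dX_isLinearMap.map_add,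
    dX_gmul, dX_D1b, dX_D2b, hg0, hD1, hD2]
  linear_combination (norm := module) sgn_mul_self (p && q) • gmul (dX (dX f)) g
    - (1 / 2 : ℂ) • hs • (gmul (D1b (dX f)) (D1b g) + gmul (D2b (dX f)) (D2b g))

theorem Xv_comm {f g : Gr} {p q : Bool} (hf : IsHom f p) (hg : IsHom g q) (F : Gr) :
    Xv f p (Xv g q F) - sgn (p && q) • Xv g q (Xv f p F) = Xv (cbr f p g) (xor p q) F := by
  obtain ⟨f0, f1, f2, f3⟩ := f
  obtain ⟨g0, g1, g2, g3⟩ := g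
  obtain ⟨F0, F1, F2, F3⟩ := F
  cases p <;> cases q <;> obtain ⟨rfl, rfl⟩ := hf <;> obtain ⟨rfl, rfl⟩ := hg <;>
    simp only [Xv, cbr, D1b, D2b, dXi1, dXi2, dX, gmul, xi1, xi2, sgn, Bool.false_and,
      Bool.and_false, Bool.and_self, Bool.xor_self, Bool.false_xor, Bool.xor_false,
      Prod.mk_add_mk, Prod.mk_sub_mk, Prod.smul_mk, Prod.mk.injEq,
      derivative_add, derivative_sub, derivative_mul, derivative_neg, derivative_zero,
      derivative_smul, mul_zero, zero_mul, add_zero, zero_add, sub_zero, zero_sub,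
      neg_zero, smul_zero, one_mul, ite_true, ite_false, Bool.false_eq_true] <;>
    refine ⟨?_, ?_, ?_, ?_⟩ <;>
    · apply Polynomial.funext
      intro z
      simp only [eval_add, eval_sub, eval_mul, eval_neg, eval_smul, smul_eq_mul]
      ring

theorem supercommutator_add_smul_gmul {X Y : Gr → Gr} (hX : IsLinearMap ℂ X)
    (hY : IsLinearMap ℂ Y) {a b : Gr} {σ : ℂ} (hσ : σ * σ = 1)
    (hXb : ∀ F, X (gmul b F) = gmul (X b) F + σ • gmul b (X F))
    (hYa : ∀ F, Y (gmul a F) = gmul (Y a) F + σ • gmul a (Y F))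
    (hab : ∀ F, gmul a (gmul b F) = σ • gmul b (gmul a F)) (lam : ℂ) (F : Gr) :
    X (Y F + lam • gmul b F) + lam • gmul a (Y F + lam • gmul b F)
        - σ • (Y (X F + lam • gmul a F) + lam • gmul b (X F + lam • gmul a F))
      = X (Y F) - σ • Y (X F) + lam • gmul (X b - σ • Y a) F := by
  simp only [hX.map_add, hY.map_add, hX.map_smul, hY.map_smul, hXb, hYa, gmul_add, gmul_smul,
    sub_gmul, smul_gmul, hab]
  linear_combination (norm := module) -lam • hσ • gmul a (Y F)

/-- `f ↦ L^λ_{X_f}` is a representation of the contact Lie superalgebra: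
`[L^λ_{X_f}, L^λ_{X_g}] = L^λ_{X_{{f,g}}}`. -/
theorem stmt4 (lam : ℂ) (f g : Gr) (p q : Bool) (hf : IsHom f p) (hg : IsHom g q) :
    ∀ F : Gr,
      L lam f p (L lam g q F) - (if p && q then (-1 : ℂ) else 1) • L lam g q (L lam f p F)
        = L lam (cbr f p g) (xor p q) F := by
  intro F
  have hg_leibniz (F : Gr) : Xv g q (gmul (dX f) F)
      = gmul (Xv g q (dX f)) F + sgn (p && q) • gmul (dX f) (Xv g q F) := by
    rw [Bool.and_comm]; exact Xv_gmul hg hf.dX F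
  calc _ = Xv f p (Xv g q F) - sgn (p && q) • Xv g q (Xv f p F)
        + lam • gmul (Xv f p (dX g) - sgn (p && q) • Xv g q (dX f)) F :=
        supercommutator_add_smul_gmul (Xv_isLinearMap f p) (Xv_isLinearMap g q)
          (sgn_mul_self (p && q)) (Xv_gmul hf hg.dX) hg_leibniz
          (gmul_left_comm_of_isHom hf.dX hg.dX) lam F
    _ = _ := by rw [Xv_comm hf hg, ← dX_cbr hf hg]; rfl

end Gr
end
end

section
/- For contact Hamiltonians f in the affine set {1, ξ₁, ξ₂, x, ξ₁ξ₂}, the term D̄₁D̄₂(f) is constant, and consequently for a half-integer-order symbol pair (F₁,F₂), the action L_{X_f}(F₁,F₂) = (L^δ_{X_f}(F₁) - ½D̄₁D̄₂(f)F₂, L^δ_{X_f}(F₂) + ½D̄₁D̄₂(f)F₁) reduces to the diagonal density action (L^δ_{X_f}F₁, L^δ_{X_f}F₂) precisely when f ∈ {1, ξ₁, ξ₂, x}, while for f = ξ₁ξ₂ it has the extra rotation term with D̄₁D̄₂(ξ₁ξ₂) = -1 (i.e. equal to a nonzero constant). -/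
noncomputable section

open Polynomial

namespace Gr

/-- The affine Hamiltonians `{1, ξ₁, ξ₂, x, ξ₁ξ₂}` with their parities. -/
def aff5 : Fin 5 → Gr × Bool :=
  ![(oneG, false), (xi1, true), (xi2, true), (xG, false), (xi12, false)]

/-- The twisted action on half-integer-order symbol pairs. -/
def Ltw (δ : ℂ) (f : Gr) (p : Bool) (F : Gr × Gr) : Gr × Gr :=
  (L δ f p F.1 - (1/2 : ℂ) • gmul (D1b (D2b f)) F.2,
   L δ f p F.2 + (1/2 : ℂ) • gmul (D1b (D2b f)) F.1)

/-
`D̄₁D̄₂(a + ξ₁b + ξ₂c + ξ₁ξ₂d) = -d - ξ₁c′ + ξ₂b′ + ξ₁ξ₂a″`, so on the affine Hamiltonians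
it is the constant `-d`, nonzero only for `ξ₁ξ₂`. Multiplying by a constant `c` is scalar
multiplication, so the twist in `Ltw` is the rotation `(F₁, F₂) ↦ (c/2) (-F₂, F₁)`, which
vanishes exactly when `c = 0`.
-/

theorem D1b_D2b_apply (a b c d : ℂ[X]) :
    D1b (D2b (a, b, c, d)) = (-d, -derivative c, derivative b, derivative (derivative a)) := by
  simp [D1b, D2b, dXi1, dXi2, dX, gmul, xi1, xi2]

theorem D1b_D2b_aff5_castSucc (i : Fin 4) : D1b (D2b (aff5 i.castSucc).1) = 0 := by
  fin_cases i <;> simp [aff5, oneG, xi1, xi2, xG, D1b_D2b_apply]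

theorem D1b_D2b_xi12 : D1b (D2b xi12) = (-1 : ℂ) • oneG := by
  simp [xi12, oneG, D1b_D2b_apply]

theorem gmul_smul_oneG (c : ℂ) (F : Gr) : gmul (c • oneG) F = c • F := by
  simp [gmul, oneG, Prod.ext_iff, Polynomial.smul_eq_C_mul]

theorem L_zero (δ : ℂ) (f : Gr) (p : Bool) : L δ f p 0 = 0 := by
  simp [L, Xv, D1b, D2b, dXi1, dXi2, dX, gmul]

theorem Ltw_of_D1b_D2b_eq_smul_oneG {δ c : ℂ} {f : Gr} {p : Bool}
    (h : D1b (D2b f) = c • oneG) (F₁ F₂ : Gr) :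
    Ltw δ f p (F₁, F₂) = (L δ f p F₁ - (c / 2) • F₂, L δ f p F₂ + (c / 2) • F₁) := by
  simp only [Ltw, h, gmul_smul_oneG, smul_smul]
  ring_nf

theorem Ltw_eq_diag_of_D1b_D2b_eq_zero {f : Gr} (h : D1b (D2b f) = 0)
    (δ : ℂ) (p : Bool) (F₁ F₂ : Gr) :
    Ltw δ f p (F₁, F₂) = (L δ f p F₁, L δ f p F₂) := by
  rw [Ltw_of_D1b_D2b_eq_smul_oneG (c := 0) (by rw [h, zero_smul])]
  simp

theorem Ltw_ne_diag_of_D1b_D2b_eq_smul_oneG {c : ℂ} (hc : c ≠ 0) {f : Gr}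
    (h : D1b (D2b f) = c • oneG) (δ : ℂ) (p : Bool) :
    Ltw δ f p (oneG, 0) ≠ (L δ f p oneG, L δ f p 0) := by
  rw [Ltw_of_D1b_D2b_eq_smul_oneG h, L_zero]
  simp [Prod.ext_iff, oneG, hc]

/-- for affine `f`, `D̄₁D̄₂(f)` is constant; the twisted action reduces to
the diagonal density action exactly for `f ∈ {1, ξ₁, ξ₂, x}`, while for `f = ξ₁ξ₂`
one has `D̄₁D̄₂(ξ₁ξ₂) = -1 ≠ 0` and the extra rotation term does not vanish. -/
theorem stmt7 :
    (∀ i : Fin 5, ∃ c : ℂ, D1b (D2b (aff5 i).1) = c • oneG) ∧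
    (∀ i : Fin 4, ∀ (δ : ℂ) (F1 F2 : Gr),
      Ltw δ (aff5 i.castSucc).1 (aff5 i.castSucc).2 (F1, F2)
        = (L δ (aff5 i.castSucc).1 (aff5 i.castSucc).2 F1,
           L δ (aff5 i.castSucc).1 (aff5 i.castSucc).2 F2)) ∧
    D1b (D2b xi12) = (-1 : ℂ) • oneG ∧ (-1 : ℂ) ≠ 0 ∧
    (∃ (δ : ℂ) (F1 F2 : Gr),
      Ltw δ xi12 false (F1, F2) ≠ (L δ xi12 false F1, L δ xi12 false F2)) := by
  refine ⟨fun i => ?_, fun i δ => Ltw_eq_diag_of_D1b_D2b_eq_zero (D1b_D2b_aff5_castSucc i) δ _,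
    D1b_D2b_xi12, by norm_num,
    ⟨0, oneG, 0, Ltw_ne_diag_of_D1b_D2b_eq_smul_oneG (by norm_num) D1b_D2b_xi12 0 false⟩⟩
  induction i using Fin.lastCases with
  | last => exact ⟨-1, D1b_D2b_xi12⟩
  | cast i => exact ⟨0, by rw [D1b_D2b_aff5_castSucc, zero_smul]⟩

end Gr
end
end

section
/- Let k ≥ 1 be an integer, λ, μ ∈ ℂ with 2(μ-λ) ∉ {0,1,2,...,2k}. Then the recurrence system ℓ(ℓ-1+2(μ-λ-k))C_{2ℓ,1} = -(k-ℓ+1)(k-ℓ+2λ)C_{2ℓ-2,1} with initial condition C_{0,1} = 1 has the unique solution C_{2ℓ,1} = (k+2λ-ℓ)(2(μ-λ-k)+ℓ)/(ℓ(k-ℓ)) · C_{2ℓ,3} for 1 ≤ ℓ ≤ k-1, where C_{2ℓ,3} = -binom(k, ℓ+1)·binom(k+2λ-1, ℓ-1)/binom(-2(μ-λ-k), ℓ+1), with generalized binomial coefficients binom(n,m) = n(n-1)⋯(n-m+1)/m!. -/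
noncomputable section

open Polynomial

namespace Gr

/-- The closed-form solution `C_{2ℓ,1}` (with `C_{0,1} = 1`). -/
noncomputable def Cform1 (k : ℕ) (lam mu : ℂ) (ℓ : ℕ) : ℂ :=
  if ℓ = 0 then 1 else
    (((k : ℂ) + 2*lam - ℓ) * (2*(mu - lam - (k : ℂ)) + ℓ) / ((ℓ : ℂ) * ((k : ℂ) - ℓ))) *
      (-(cbinom (k : ℂ) (ℓ+1) * cbinom ((k : ℂ) + 2*lam - 1) (ℓ-1))
        / cbinom (-2*(mu - lam - (k : ℂ))) (ℓ+1))

/-! With `w = -2(μ-λ-k)`, the closed form collapses for `1 ≤ ℓ < k` to the hypergeometric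
term `binom(k, ℓ) binom(k+2λ-1, ℓ) / binom(w, ℓ)`, whose ratio of consecutive terms is exactly
the recurrence. Nonresonance says `w ∉ {0, …, 2k}`, so the leading coefficient `ℓ(ℓ-1-w)` never
vanishes and the recurrence determines the solution from `C₀`. -/

theorem cbinom_zero (z : ℂ) : cbinom z 0 = 1 := by
  simp [cbinom]

theorem cbinom_succ (z : ℂ) (m : ℕ) :
    cbinom z (m + 1) = cbinom z m * (z - m) / (m + 1) := by
  simp only [cbinom, Finset.prod_range_succ, Nat.factorial_succ]
  push_cast
  field_simp

theorem cbinom_ne_zero {z : ℂ} {m : ℕ} (h : ∀ i < m, z ≠ i) : cbinom z m ≠ 0 :=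
  div_ne_zero
    (Finset.prod_ne_zero_iff.mpr fun i hi => sub_ne_zero.mpr (h i (Finset.mem_range.mp hi)))
    (Nat.cast_ne_zero.mpr (Nat.factorial_ne_zero m))

def cbinomRatio (a b c : ℂ) (ℓ : ℕ) : ℂ :=
  cbinom a ℓ * cbinom b ℓ / cbinom c ℓ

theorem cbinomRatio_zero (a b c : ℂ) : cbinomRatio a b c 0 = 1 := by
  simp [cbinomRatio, cbinom_zero]

theorem cbinomRatio_succ (a b c : ℂ) (n : ℕ) (hc : c ≠ n) :
    (n + 1) * (c - n) * cbinomRatio a b c (n + 1) = (a - n) * (b - n) * cbinomRatio a b c n := by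
  have hn : (n + 1 : ℂ) ≠ 0 := Nat.cast_add_one_ne_zero n
  have hcn : c - n ≠ 0 := sub_ne_zero.mpr hc
  by_cases h : cbinom c n = 0
  · simp [cbinomRatio, cbinom_succ c n, h]
  · simp only [cbinomRatio, cbinom_succ]
    field_simp

theorem Cform1_eq_cbinomRatio (k : ℕ) (lam mu : ℂ) (ℓ : ℕ) (hℓk : ℓ < k)
    (hres : ∀ i ≤ ℓ, -2 * (mu - lam - k) ≠ i) :
    Cform1 k lam mu ℓ = cbinomRatio k (k + 2 * lam - 1) (-2 * (mu - lam - k)) ℓ := by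
  obtain _ | n := ℓ
  · simp [Cform1, cbinomRatio_zero]
  simp only [Cform1, cbinomRatio, if_neg (Nat.succ_ne_zero n), Nat.add_sub_cancel,
    cbinom_succ _ (n + 1), cbinom_succ ((k : ℂ) + 2 * lam - 1) n]
  set w := -2 * (mu - lam - k) with hw
  have hwn : w - (n + 1) ≠ 0 := by
    have := hres (n + 1) le_rfl
    push_cast at this
    exact sub_ne_zero.mpr this
  have hcw : cbinom w (n + 1) ≠ 0 := cbinom_ne_zero fun i hi => hres i hi.le
  have hkn : (k : ℂ) - (n + 1) ≠ 0 := by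
    rw [sub_ne_zero]; exact_mod_cast hℓk.ne'
  have h1 : (n + 1 : ℂ) ≠ 0 := Nat.cast_add_one_ne_zero n
  have h2 : (n + 1 + 1 : ℂ) ≠ 0 := by exact_mod_cast Nat.succ_ne_zero (n + 1)
  rw [show 2 * (mu - lam - k) = -w by rw [hw]; ring]
  push_cast
  field_simp
  ring

theorem Cform1_recurrence (k : ℕ) (lam mu : ℂ) (hw : ∀ i < k, -2 * (mu - lam - k) ≠ i)
    (ℓ : ℕ) (h1 : 1 ≤ ℓ) (hℓ : ℓ ≤ k - 1) :
    (ℓ : ℂ) * ((ℓ : ℂ) - 1 + 2*(mu - lam - (k : ℂ))) * Cform1 k lam mu ℓ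
      = -(((k : ℂ) - ℓ + 1) * ((k : ℂ) - ℓ + 2*lam)) * Cform1 k lam mu (ℓ-1) := by
  obtain ⟨n, rfl⟩ := Nat.exists_eq_add_of_le' h1
  rw [Nat.add_sub_cancel, Cform1_eq_cbinomRatio k lam mu _ (by omega) fun i _ => hw i (by omega),
    Cform1_eq_cbinomRatio k lam mu _ (by omega) fun i _ => hw i (by omega)]
  push_cast
  linear_combination
    -cbinomRatio_succ k (k + 2 * lam - 1) (-2 * (mu - lam - k)) n (hw n (by omega))

theorem eq_of_recurrence {M : Type*} [MonoidWithZero M] [IsLeftCancelMulZero M]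
    {a b C D : ℕ → M} {N : ℕ}
    (ha : ∀ ℓ, 1 ≤ ℓ → ℓ ≤ N → a ℓ ≠ 0) (h0 : C 0 = D 0)
    (hC : ∀ ℓ, 1 ≤ ℓ → ℓ ≤ N → a ℓ * C ℓ = b ℓ * C (ℓ - 1))
    (hD : ∀ ℓ, 1 ≤ ℓ → ℓ ≤ N → a ℓ * D ℓ = b ℓ * D (ℓ - 1)) :
    ∀ ℓ ≤ N, C ℓ = D ℓ := by
  intro ℓ hℓ
  induction ℓ with
  | zero => exact h0
  | succ n ih =>
    refine mul_left_cancel₀ (ha (n + 1) (by omega) hℓ) ?_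
    rw [hC _ (by omega) hℓ, hD _ (by omega) hℓ, Nat.add_sub_cancel, ih (by omega)]

theorem stmt8_general (k : ℕ) (lam mu : ℂ)
    (hres : ∀ j : ℕ, j ≤ 2*k → 2*(mu - lam) ≠ (j : ℂ)) :
    (Cform1 k lam mu 0 = 1 ∧
      ∀ ℓ : ℕ, 1 ≤ ℓ → ℓ ≤ k - 1 →
        (ℓ : ℂ) * ((ℓ : ℂ) - 1 + 2*(mu - lam - (k : ℂ))) * Cform1 k lam mu ℓ
          = -(((k : ℂ) - ℓ + 1) * ((k : ℂ) - ℓ + 2*lam)) * Cform1 k lam mu (ℓ-1)) ∧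
    ∀ C : ℕ → ℂ, C 0 = 1 →
      (∀ ℓ : ℕ, 1 ≤ ℓ → ℓ ≤ k - 1 →
        (ℓ : ℂ) * ((ℓ : ℂ) - 1 + 2*(mu - lam - (k : ℂ))) * C ℓ
          = -(((k : ℂ) - ℓ + 1) * ((k : ℂ) - ℓ + 2*lam)) * C (ℓ-1)) →
      ∀ ℓ : ℕ, 1 ≤ ℓ → ℓ ≤ k - 1 → C ℓ = Cform1 k lam mu ℓ := by
  have hw : ∀ i < k, -2 * (mu - lam - k) ≠ i := by
    intro i hi h
    refine hres (2 * k - i) (Nat.sub_le _ _) ?_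
    push_cast [Nat.cast_sub (by omega : i ≤ 2 * k)]
    linear_combination -h
  have hrec := Cform1_recurrence k lam mu hw
  refine ⟨⟨if_pos rfl, hrec⟩, fun C hC0 hC ℓ _ hℓ => ?_⟩
  refine eq_of_recurrence (fun ℓ h1 _ => mul_ne_zero ?_ ?_) (hC0.trans (if_pos rfl).symm) hC hrec
    ℓ hℓ
  · exact_mod_cast (by omega : ℓ ≠ 0)
  · intro h
    exact hw (ℓ - 1) (by omega) (by push_cast [Nat.cast_sub h1]; linear_combination -h)

/-- under the nonresonance condition `2(μ-λ) ∉ {0,1,…,2k}`, the recurrence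
`ℓ(ℓ-1+2(μ-λ-k))C_{2ℓ,1} = -(k-ℓ+1)(k-ℓ+2λ)C_{2ℓ-2,1}` with `C_{0,1} = 1` has the
closed form `Cform1` as its unique solution on `1 ≤ ℓ ≤ k-1`. -/
theorem stmt8 (k : ℕ) (hk : 1 ≤ k) (lam mu : ℂ)
    (hres : ∀ j : ℕ, j ≤ 2*k → 2*(mu - lam) ≠ (j : ℂ)) :
    (Cform1 k lam mu 0 = 1 ∧
      ∀ ℓ : ℕ, 1 ≤ ℓ → ℓ ≤ k - 1 →
        (ℓ : ℂ) * ((ℓ : ℂ) - 1 + 2*(mu - lam - (k : ℂ))) * Cform1 k lam mu ℓ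
          = -(((k : ℂ) - ℓ + 1) * ((k : ℂ) - ℓ + 2*lam)) * Cform1 k lam mu (ℓ-1)) ∧
    ∀ C : ℕ → ℂ, C 0 = 1 →
      (∀ ℓ : ℕ, 1 ≤ ℓ → ℓ ≤ k - 1 →
        (ℓ : ℂ) * ((ℓ : ℂ) - 1 + 2*(mu - lam - (k : ℂ))) * C ℓ
          = -(((k : ℂ) - ℓ + 1) * ((k : ℂ) - ℓ + 2*lam)) * C (ℓ-1)) →
      ∀ ℓ : ℕ, 1 ≤ ℓ → ℓ ≤ k - 1 → C ℓ = Cform1 k lam mu ℓ :=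
  stmt8_general k lam mu hres

end Gr
end
end

section
/- Let k ≥ 1 be an integer and λ, μ ∈ ℂ with 2(μ-λ) ∉ {0,1,...,2k}. Define C_{2ℓ,2} = binom(k-1, ℓ-1)·binom(k+2λ, ℓ+1)/binom(-2(μ-λ-k), ℓ+1). Then C_{2ℓ,4} := -((k-ℓ)(2(μ-λ-k)+ℓ))/(ℓ(k-ℓ+2λ)) · C_{2ℓ,2} satisfies the recurrence ℓ(ℓ-1+2(μ-λ-k))C_{2ℓ,4} = -(k-ℓ)(k-ℓ+2λ+1)C_{2ℓ-2,4} for all 2 ≤ ℓ ≤ k-1 (assuming all denominators are nonzero). -/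
/-!
Both sides of the recurrence are multiples of `C_{2ℓ-2,2}`. Consecutive generalized binomial
coefficients differ by a linear factor, `binom(z, m+1) = binom(z, m) (z - m)/(m+1)`, so
`C_{2ℓ,2}/C_{2ℓ-2,2} = (k-ℓ+1)(k+2λ-ℓ) / ((ℓ-1)(-2(μ-λ-k)-ℓ))`.
Here `-2(μ-λ-k)-ℓ` is a factor of the nonzero `binom(-2(μ-λ-k), ℓ+1)`, so it cancels against the prefactor of
`C_{2ℓ,4}`, as does `k-ℓ+2λ`, leaving `C_{2ℓ,4} = (k-ℓ)(k-ℓ+1)/(ℓ(ℓ-1)) · C_{2ℓ-2,2}`;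
the recurrence is then an identity of rational functions.
-/

noncomputable section

open Polynomial

namespace Gr

/-- `C_{2ℓ,2} = binom(k-1,ℓ-1)·binom(k+2λ,ℓ+1)/binom(-2(μ-λ-k),ℓ+1)`. -/
noncomputable def C2f (k : ℕ) (lam mu : ℂ) (ℓ : ℕ) : ℂ :=
  cbinom ((k : ℂ) - 1) (ℓ-1) * cbinom ((k : ℂ) + 2*lam) (ℓ+1)
    / cbinom (-2*(mu - lam - (k : ℂ))) (ℓ+1)

/-- `C_{2ℓ,4} = -((k-ℓ)(2(μ-λ-k)+ℓ))/(ℓ(k-ℓ+2λ)) · C_{2ℓ,2}`. -/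
noncomputable def C4f (k : ℕ) (lam mu : ℂ) (ℓ : ℕ) : ℂ :=
  -(((k : ℂ) - ℓ) * (2*(mu - lam - (k : ℂ)) + ℓ)) / ((ℓ : ℂ) * ((k : ℂ) - ℓ + 2*lam))
    * C2f k lam mu ℓ

theorem cbinom_eq_zero_iff (z : ℂ) (m : ℕ) : cbinom z m = 0 ↔ ∃ i < m, z = i := by
  simp [cbinom, Finset.prod_eq_zero_iff, sub_eq_zero, Nat.factorial_ne_zero]

theorem sub_ne_zero_of_cbinom_succ_ne_zero {z : ℂ} {m : ℕ} (h : cbinom z (m + 1) ≠ 0) :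
    z - m ≠ 0 :=
  sub_ne_zero.mpr fun hz => h <| (cbinom_eq_zero_iff z (m + 1)).mpr ⟨m, m.lt_succ_self, hz⟩

theorem C2f_succ (k : ℕ) (lam mu : ℂ) {ℓ : ℕ} (hℓ : 1 ≤ ℓ) :
    C2f k lam mu (ℓ + 1) = C2f k lam mu ℓ * (((k : ℂ) - ℓ) * ((k : ℂ) + 2*lam - (ℓ + 1)))
      / (ℓ * (-2*(mu - lam - (k : ℂ)) - (ℓ + 1))) := by
  obtain ⟨n, rfl⟩ : ∃ n, ℓ = n + 1 := ⟨ℓ - 1, by omega⟩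
  simp only [C2f, Nat.add_sub_cancel, cbinom_succ _ n, cbinom_succ _ (n + 1 + 1)]
  rw [mul_div_assoc', div_div_div_cancel_right₀ (Nat.cast_add_one_ne_zero _)]
  push_cast
  simp only [div_eq_mul_inv, mul_inv]
  ring

theorem C4f_succ_eq (k : ℕ) (lam mu : ℂ) {ℓ : ℕ} (hℓ : 1 ≤ ℓ)
    (hden : (k : ℂ) - (ℓ + 1 : ℕ) + 2*lam ≠ 0)
    (hz : -2*(mu - lam - (k : ℂ)) - (ℓ + 1 : ℕ) ≠ 0) :
    C4f k lam mu (ℓ + 1) = ((k : ℂ) - (ℓ + 1)) * ((k : ℂ) - ℓ) / ((ℓ + 1) * ℓ) * C2f k lam mu ℓ := by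
  have hℓ0 : (ℓ : ℂ) ≠ 0 := by exact_mod_cast (by omega : ℓ ≠ 0)
  have hℓ1 : (ℓ : ℂ) + 1 ≠ 0 := by exact_mod_cast ℓ.succ_ne_zero
  have hz' : 2*(mu - lam - (k : ℂ)) + (ℓ + 1) ≠ 0 := by
    push_cast at hz; contrapose! hz; linear_combination -hz
  push_cast at hden
  rw [C4f, C2f_succ k lam mu hℓ]
  push_cast
  rw [show -2*(mu - lam - (k : ℂ)) - (ℓ + 1) = -(2*(mu - lam - (k : ℂ)) + (ℓ + 1)) by ring]
  field_simp
  ring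

theorem stmt9_general (k : ℕ) (lam mu : ℂ) :
    ∀ ℓ : ℕ, 2 ≤ ℓ → ℓ ≤ k - 1 →
      ((k : ℂ) - ℓ + 2*lam) ≠ 0 → ((k : ℂ) - (ℓ - 1 : ℕ) + 2*lam) ≠ 0 →
      cbinom (-2*(mu - lam - (k : ℂ))) (ℓ+1) ≠ 0 →
      cbinom (-2*(mu - lam - (k : ℂ))) ℓ ≠ 0 →
      (ℓ : ℂ) * ((ℓ : ℂ) - 1 + 2*(mu - lam - (k : ℂ))) * C4f k lam mu ℓ
        = -(((k : ℂ) - ℓ) * ((k : ℂ) - ℓ + 2*lam + 1)) * C4f k lam mu (ℓ-1) := by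
  rintro ℓ hℓ - hden hden' hbinom -
  obtain ⟨n, rfl⟩ : ∃ n, ℓ = n + 1 + 1 := ⟨ℓ - 2, by omega⟩
  have hz := sub_ne_zero_of_cbinom_succ_ne_zero hbinom
  have hn1 : (n : ℂ) + 1 ≠ 0 := Nat.cast_add_one_ne_zero n
  have hn2 : (n : ℂ) + 1 + 1 ≠ 0 := by exact_mod_cast (n + 1).succ_ne_zero
  rw [C4f_succ_eq k lam mu (by omega) hden hz, Nat.add_sub_cancel, C4f]
  push_cast at hden' ⊢
  field_simp
  ring

/-- `C_{2ℓ,4}` satisfies the recurrence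
`ℓ(ℓ-1+2(μ-λ-k))C_{2ℓ,4} = -(k-ℓ)(k-ℓ+2λ+1)C_{2ℓ-2,4}` for `2 ≤ ℓ ≤ k-1`
(assuming the denominators are nonzero). -/
theorem stmt9 (k : ℕ) (hk : 1 ≤ k) (lam mu : ℂ)
    (hres : ∀ j : ℕ, j ≤ 2*k → 2*(mu - lam) ≠ (j : ℂ)) :
    ∀ ℓ : ℕ, 2 ≤ ℓ → ℓ ≤ k - 1 →
      ((k : ℂ) - ℓ + 2*lam) ≠ 0 → ((k : ℂ) - (ℓ - 1 : ℕ) + 2*lam) ≠ 0 →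
      cbinom (-2*(mu - lam - (k : ℂ))) (ℓ+1) ≠ 0 →
      cbinom (-2*(mu - lam - (k : ℂ))) ℓ ≠ 0 →
      (ℓ : ℂ) * ((ℓ : ℂ) - 1 + 2*(mu - lam - (k : ℂ))) * C4f k lam mu ℓ
        = -(((k : ℂ) - ℓ) * ((k : ℂ) - ℓ + 2*lam + 1)) * C4f k lam mu (ℓ-1) :=
  stmt9_general k lam mu

end Gr
end
end

section
/- If μ - λ ∈ ℂ with 2(μ-λ) ∉ ℕ, then for every integer k ≥ 1 the homogeneous linear system consisting of the eight families of recurrences in ℓ (listed as conditions (d) in the construction of the osp(2|2)-equivariant quantization of order-k symbols), with prescribed leading coefficients C_{0,1} = C_{0,4} = 1 and C_{0,2} = C_{0,3} = C_{-1,i} = 0, admits exactly one solution (C_{m,i}). -/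
/-! Away from `2(μ - λ) ∈ ℕ` the coefficients `ℓ(ℓ - 1 + 2(μ - λ - k))` (for `1 ≤ ℓ`) and
`(ℓ + 1)(ℓ + 2(μ - λ - k))` in front of the unknowns `C_{2ℓ,i}` and `C_{2ℓ+1,i}` do not vanish, so
the equations can be solved for `C_m` in terms of `C_{m-2}` and `C_{m-1}`: for `1 ≤ m ≤ 2k` the
system is an explicit two-step recurrence, which has exactly one solution with the prescribed
values at `m = -1, 0`. The remaining equations hold automatically: the even ones at `ℓ = 0` only
restate `C_{0,2} = C_{0,3} = 0`, and the odd ones at `ℓ = k`, where `C_{2k+1} = 0`, only ask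
`C_{2k,4} = 0`, which the recurrence at `m = 2k` forces through its factor `k - ℓ`. -/

noncomputable section

open Polynomial

theorem Fin.forall_fin_four {P : Fin 4 → Prop} : (∀ i, P i) ↔ P 0 ∧ P 1 ∧ P 2 ∧ P 3 :=
  ⟨fun h => ⟨h 0, h 1, h 2, h 3⟩, fun ⟨h₀, h₁, h₂, h₃⟩ i => by fin_cases i <;> assumption⟩

theorem Pi.mul_eq_iff_eq_div {ι G₀ : Type*} [CommGroupWithZero G₀] {u c r : ι → G₀}
    (hu : ∀ i, u i ≠ 0) : u * c = r ↔ c = r / u := by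
  simp only [funext_iff, Pi.mul_apply, Pi.div_apply]
  exact forall_congr' fun i => by rw [eq_div_iff (hu i), mul_comm]

section TwoStep

variable {X : Type*} [Zero X]

def IsTwoStepSolution (N : ℕ) (x₀ : X) (f : ℕ → X → X → X) (C : ℤ → X) : Prop :=
  (∀ m : ℤ, (m < -1 ∨ N < m) → C m = 0) ∧ C (-1) = 0 ∧ C 0 = x₀ ∧
    ∀ m : ℕ, 1 ≤ m → m ≤ N → C m = f m (C (m - 2)) (C (m - 1))

/-- `twoStepSeq x₀ f n` is the term of index `n - 1`. -/
def twoStepSeq (x₀ : X) (f : ℕ → X → X → X) : ℕ → X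
  | 0 => 0
  | 1 => x₀
  | n + 2 => f (n + 1) (twoStepSeq x₀ f n) (twoStepSeq x₀ f (n + 1))

def twoStepSolution (N : ℕ) (x₀ : X) (f : ℕ → X → X → X) (m : ℤ) : X :=
  if m ≤ N then twoStepSeq x₀ f (m + 1).toNat else 0

theorem isTwoStepSolution_twoStepSolution (N : ℕ) (x₀ : X) (f : ℕ → X → X → X) :
    IsTwoStepSolution N x₀ f (twoStepSolution N x₀ f) := by
  refine ⟨fun m hm => ?_, ?_, ?_, fun m h1 hm => ?_⟩ <;> simp only [twoStepSolution]
  · rcases hm with hm | hm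
    · rw [if_pos (by omega), show (m + 1).toNat = 0 by omega, twoStepSeq]
    · rw [if_neg (by omega)]
  · rw [if_pos (by omega)]; rfl
  · rw [if_pos (by omega)]; rfl
  · obtain ⟨n, rfl⟩ : ∃ n, m = n + 1 := ⟨m - 1, by omega⟩
    simp only [if_pos (show ((n + 1 : ℕ) : ℤ) ≤ N by omega),
      if_pos (show ((n + 1 : ℕ) : ℤ) - 2 ≤ N by omega),
      if_pos (show ((n + 1 : ℕ) : ℤ) - 1 ≤ N by omega)]
    rw [show ((n + 1 : ℕ) : ℤ) + 1 = ((n + 2 : ℕ) : ℤ) by push_cast; ring,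
      show ((n + 1 : ℕ) : ℤ) - 2 + 1 = (n : ℤ) by push_cast; ring,
      show ((n + 1 : ℕ) : ℤ) - 1 + 1 = ((n + 1 : ℕ) : ℤ) by push_cast; ring]
    simp only [Int.toNat_natCast, twoStepSeq]

theorem IsTwoStepSolution.unique {N : ℕ} {x₀ : X} {f : ℕ → X → X → X} {C D : ℤ → X}
    (hC : IsTwoStepSolution N x₀ f C) (hD : IsTwoStepSolution N x₀ f D) : C = D := by
  obtain ⟨hCs, hC₁, hC₀, hCf⟩ := hC
  obtain ⟨hDs, hD₁, hD₀, hDf⟩ := hD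
  have agree : ∀ n : ℕ, n ≤ N → C (n - 1) = D (n - 1) ∧ C n = D n := by
    intro n hn
    induction n with
    | zero => simpa [hD₁, hD₀] using ⟨hC₁, hC₀⟩
    | succ n ih =>
      obtain ⟨h₁, h₂⟩ := ih (by omega)
      refine ⟨by simpa using h₂, ?_⟩
      rw [hCf (n + 1) (by omega) hn, hDf (n + 1) (by omega) hn]
      push_cast
      rw [show (n : ℤ) + 1 - 2 = n - 1 by ring, add_sub_cancel_right, h₁, h₂]
  funext m
  by_cases hout : m < -1 ∨ N < m
  · rw [hCs m hout, hDs m hout]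
  · rcases eq_or_ne m (-1) with rfl | hne
    · rw [hC₁, hD₁]
    · lift m to ℕ using (by omega)
      exact (agree m (by omega)).2

theorem existsUnique_isTwoStepSolution (N : ℕ) (x₀ : X) (f : ℕ → X → X → X) :
    ∃! C : ℤ → X, IsTwoStepSolution N x₀ f C :=
  ⟨_, isTwoStepSolution_twoStepSolution N x₀ f,
    fun _ hD => hD.unique (isTwoStepSolution_twoStepSolution N x₀ f)⟩

end TwoStep

namespace Gr

section Recurrences

variable (k : ℕ) (lam mu ε : ℂ)

def pivot (x : ℂ) : ℂ := (x + 1) * (x + 2 * (mu - lam - k))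

def evenCoeff (ℓ : ℕ) : Fin 4 → ℂ :=
  ![(ℓ : ℂ) * ((ℓ : ℂ) - 1 + 2 * (mu - lam - k)), pivot k lam mu ℓ, pivot k lam mu ℓ,
    (ℓ : ℂ) * ((ℓ : ℂ) - 1 + 2 * (mu - lam - k))]

def evenRhs (ℓ : ℕ) (a b : Fin 4 → ℂ) : Fin 4 → ℂ :=
  ![-(((k : ℂ) - ℓ + 1) * ((k : ℂ) - ℓ + 2 * lam)) * a 0,
    ((k : ℂ) - ℓ + 2 * lam) * (ε * (b 1 - b 3) - ((k : ℂ) - ℓ + 1) * a 1),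
    -((k : ℂ) - ℓ) * (ε * (b 0 + b 2) + ((k : ℂ) - ℓ + 2 * lam + 1) * a 2),
    -(((k : ℂ) - ℓ) * ((k : ℂ) - ℓ + 2 * lam + 1)) * a 3]

def oddRhs (ℓ : ℕ) (a b : Fin 4 → ℂ) : Fin 4 → ℂ :=
  ![((k : ℂ) - ℓ) * (ε * b 0 - ((k : ℂ) - ℓ + 2 * lam) * a 0),
    ((k : ℂ) - ℓ + 2 * lam) * (ε * b 3 - ((k : ℂ) - ℓ) * a 1),
    ((k : ℂ) - ℓ) * (ε * b 0 - ((k : ℂ) - ℓ + 2 * lam) * a 2),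
    -((k : ℂ) - ℓ + 2 * lam) * (ε * b 3 + ((k : ℂ) - ℓ) * a 3)]

-- The value of `C m` forced by `C (m - 2) = a` and `C (m - 1) = b`; junk at `m = 0`, where
-- `evenCoeff 0` has zero entries.
def step (m : ℕ) (a b : Fin 4 → ℂ) : Fin 4 → ℂ :=
  if Even m then evenRhs k lam ε (m / 2) a b / evenCoeff k lam mu (m / 2)
  else (pivot k lam mu (m / 2 : ℕ))⁻¹ • oddRhs k lam ε (m / 2) a b

variable {k lam mu ε}

theorem pivot_ne_zero (hres : ∀ n : ℕ, 2 * (mu - lam) ≠ n) {n : ℕ} (hn : n ≤ 2 * k) :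
    pivot k lam mu n ≠ 0 := by
  refine mul_ne_zero (Nat.cast_add_one_ne_zero n) fun h => hres (2 * k - n) ?_
  push_cast [Nat.cast_sub hn]
  linear_combination h

theorem evenCoeff_ne_zero (hres : ∀ n : ℕ, 2 * (mu - lam) ≠ n) {ℓ : ℕ} (h1 : 1 ≤ ℓ)
    (hℓ : ℓ ≤ k) (i : Fin 4) : evenCoeff k lam mu ℓ i ≠ 0 := by
  have hpred : (ℓ : ℂ) * ((ℓ : ℂ) - 1 + 2 * (mu - lam - k)) ≠ 0 := by
    obtain ⟨n, rfl⟩ : ∃ n, ℓ = n + 1 := ⟨ℓ - 1, by omega⟩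
    convert pivot_ne_zero (k := k) hres (n := n) (by omega) using 1
    push_cast [pivot]
    ring
  fin_cases i <;> simp [evenCoeff, hpred, pivot_ne_zero hres (show ℓ ≤ 2 * k by omega)]

theorem evenEq_iff (hres : ∀ n : ℕ, 2 * (mu - lam) ≠ n) {ℓ : ℕ} (h1 : 1 ≤ ℓ) (hℓ : ℓ ≤ k)
    {a b c : Fin 4 → ℂ} :
    evenCoeff k lam mu ℓ * c = evenRhs k lam ε ℓ a b ↔ c = step k lam mu ε (2 * ℓ) a b := by
  rw [step, if_pos (even_two_mul ℓ), Nat.mul_div_cancel_left ℓ two_pos]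
  exact Pi.mul_eq_iff_eq_div (evenCoeff_ne_zero hres h1 hℓ)

theorem oddEq_iff (hres : ∀ n : ℕ, 2 * (mu - lam) ≠ n) {ℓ : ℕ} (hℓ : ℓ ≤ k)
    {a b c : Fin 4 → ℂ} :
    pivot k lam mu ℓ • c = oddRhs k lam ε ℓ a b ↔ c = step k lam mu ε (2 * ℓ + 1) a b := by
  rw [step, if_neg (Nat.not_even_two_mul_add_one ℓ), Nat.mul_add_div two_pos]
  simp only [Nat.reduceDiv, add_zero]
  exact (eq_inv_smul_iff₀ (pivot_ne_zero hres (by omega))).symm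

theorem evenEq_zero {c : Fin 4 → ℂ} (h1 : c 1 = 0) (h2 : c 2 = 0) :
    evenCoeff k lam mu 0 * c = evenRhs k lam ε 0 0 0 := by
  funext i
  fin_cases i <;> simp [evenCoeff, evenRhs, h1, h2]

theorem step_two_mul_self_three (a b : Fin 4 → ℂ) : step k lam mu ε (2 * k) a b 3 = 0 := by
  simp [step, evenRhs]

theorem oddEq_self {a b : Fin 4 → ℂ} (hb : b 3 = 0) :
    pivot k lam mu k • (0 : Fin 4 → ℂ) = oddRhs k lam ε k a b := by
  funext i
  fin_cases i <;> simp [oddRhs, hb]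

variable (k lam mu ε) in
def SolvesRecurrences (C : ℤ → Fin 4 → ℂ) : Prop :=
  ∀ ℓ : ℕ, ℓ ≤ k →
    evenCoeff k lam mu ℓ * C (2 * ℓ) = evenRhs k lam ε ℓ (C (2 * ℓ - 2)) (C (2 * ℓ - 1)) ∧
      pivot k lam mu ℓ • C (2 * ℓ + 1) = oddRhs k lam ε ℓ (C (2 * ℓ - 1)) (C (2 * ℓ))

theorem SolvesRecurrences.step_eq (hres : ∀ n : ℕ, 2 * (mu - lam) ≠ n) {C : ℤ → Fin 4 → ℂ}
    (hC : SolvesRecurrences k lam mu ε C) {m : ℕ} (h1 : 1 ≤ m) (hm : m ≤ 2 * k) :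
    C m = step k lam mu ε m (C (m - 2)) (C (m - 1)) := by
  obtain ⟨ℓ, rfl | rfl⟩ := Nat.even_or_odd' m
  · push_cast
    exact (evenEq_iff hres (by omega) (by omega)).mp (hC ℓ (by omega)).1
  · push_cast
    rw [show 2 * (ℓ : ℤ) + 1 - 2 = 2 * ℓ - 1 by ring, add_sub_cancel_right]
    exact (oddEq_iff hres (by omega)).mp (hC ℓ (by omega)).2

theorem solvesRecurrences_of_isTwoStepSolution (hk : 1 ≤ k)
    (hres : ∀ n : ℕ, 2 * (mu - lam) ≠ n) {C : ℤ → Fin 4 → ℂ}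
    (hC : IsTwoStepSolution (2 * k) ![1, 0, 0, 1] (step k lam mu ε) C) :
    SolvesRecurrences k lam mu ε C := by
  obtain ⟨hsupp, hC₁, hC₀, hstep⟩ := hC
  intro ℓ hℓ
  constructor
  · rcases Nat.eq_zero_or_pos ℓ with rfl | hpos
    · simp only [Nat.cast_zero, mul_zero, zero_sub]
      rw [hsupp (-2) (.inl (by norm_num)), hC₁, hC₀]
      exact evenEq_zero rfl rfl
    · rw [evenEq_iff hres hpos hℓ]
      exact_mod_cast hstep (2 * ℓ) (by omega) (by omega)
  · rcases hℓ.lt_or_eq with hlt | rfl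
    · have hodd := hstep (2 * ℓ + 1) (by omega) (by omega)
      push_cast at hodd
      rw [show 2 * (ℓ : ℤ) + 1 - 2 = 2 * ℓ - 1 by ring, add_sub_cancel_right] at hodd
      exact (oddEq_iff hres hℓ).mpr hodd
    · have hlast : C (2 * ℓ) = step ℓ lam mu ε (2 * ℓ) (C (2 * ℓ - 2)) (C (2 * ℓ - 1)) := by
        exact_mod_cast hstep (2 * ℓ) (by omega) le_rfl
      rw [hsupp (2 * ℓ + 1) (.inr (by omega))]
      exact oddEq_self (by rw [hlast, step_two_mul_self_three])

theorem isTwoStepSolution_iff (hk : 1 ≤ k) (hres : ∀ n : ℕ, 2 * (mu - lam) ≠ n)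
    (C : ℤ → Fin 4 → ℂ) :
    IsTwoStepSolution (2 * k) ![1, 0, 0, 1] (step k lam mu ε) C ↔
      (∀ m : ℤ, (m < -1 ∨ 2 * (k : ℤ) < m) → ∀ i : Fin 4, C m i = 0) ∧
      C 0 0 = 1 ∧ C 0 3 = 1 ∧ C 0 1 = 0 ∧ C 0 2 = 0 ∧ (∀ i : Fin 4, C (-1) i = 0) ∧
      SolvesRecurrences k lam mu ε C := by
  constructor
  · intro hC
    refine ⟨fun m hm => congrFun (hC.1 m hm), ?_, ?_, ?_, ?_, congrFun hC.2.1,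
      solvesRecurrences_of_isTwoStepSolution hk hres hC⟩ <;> simp [hC.2.2.1]
  · rintro ⟨hsupp, h0, h3, h1, h2, hC₁, hrec⟩
    exact ⟨fun m hm => funext (hsupp m hm), funext hC₁,
      funext (Fin.forall_fin_four.mpr ⟨h0, h1, h2, h3⟩), fun m => hrec.step_eq hres⟩

end Recurrences

theorem stmt15_general (k : ℕ) (hk : 1 ≤ k) (lam mu : ℂ)
    (hres : ∀ n : ℕ, 2*(mu - lam) ≠ (n : ℂ)) (ε : ℂ) :
    ∃! C : ℤ → Fin 4 → ℂ,
      (∀ m : ℤ, (m < -1 ∨ 2*(k : ℤ) < m) → ∀ i : Fin 4, C m i = 0) ∧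
      C 0 0 = 1 ∧ C 0 3 = 1 ∧ C 0 1 = 0 ∧ C 0 2 = 0 ∧ (∀ i : Fin 4, C (-1) i = 0) ∧
      (∀ ℓ : ℕ, ℓ ≤ k →
        ((ℓ : ℂ) * ((ℓ : ℂ) - 1 + 2*(mu - lam - (k : ℂ))) * C (2*ℓ) 0
            = -(((k : ℂ) - ℓ + 1) * ((k : ℂ) - ℓ + 2*lam)) * C (2*ℓ - 2) 0 ∧
         ((ℓ : ℂ) + 1) * ((ℓ : ℂ) + 2*(mu - lam - (k : ℂ))) * C (2*ℓ) 1
            = ((k : ℂ) - ℓ + 2*lam) *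
                (ε * (C (2*ℓ - 1) 1 - C (2*ℓ - 1) 3) - ((k : ℂ) - ℓ + 1) * C (2*ℓ - 2) 1) ∧
         ((ℓ : ℂ) + 1) * ((ℓ : ℂ) + 2*(mu - lam - (k : ℂ))) * C (2*ℓ) 2
            = -((k : ℂ) - ℓ) *
                (ε * (C (2*ℓ - 1) 0 + C (2*ℓ - 1) 2) + ((k : ℂ) - ℓ + 2*lam + 1) * C (2*ℓ - 2) 2) ∧
         (ℓ : ℂ) * ((ℓ : ℂ) - 1 + 2*(mu - lam - (k : ℂ))) * C (2*ℓ) 3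
            = -(((k : ℂ) - ℓ) * ((k : ℂ) - ℓ + 2*lam + 1)) * C (2*ℓ - 2) 3 ∧
         ((ℓ : ℂ) + 1) * ((ℓ : ℂ) + 2*(mu - lam - (k : ℂ))) * C (2*ℓ + 1) 0
            = ((k : ℂ) - ℓ) * (ε * C (2*ℓ) 0 - ((k : ℂ) - ℓ + 2*lam) * C (2*ℓ - 1) 0) ∧
         ((ℓ : ℂ) + 1) * ((ℓ : ℂ) + 2*(mu - lam - (k : ℂ))) * C (2*ℓ + 1) 1
            = ((k : ℂ) - ℓ + 2*lam) * (ε * C (2*ℓ) 3 - ((k : ℂ) - ℓ) * C (2*ℓ - 1) 1) ∧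
         ((ℓ : ℂ) + 1) * ((ℓ : ℂ) + 2*(mu - lam - (k : ℂ))) * C (2*ℓ + 1) 2
            = ((k : ℂ) - ℓ) * (ε * C (2*ℓ) 0 - ((k : ℂ) - ℓ + 2*lam) * C (2*ℓ - 1) 2) ∧
         ((ℓ : ℂ) + 1) * ((ℓ : ℂ) + 2*(mu - lam - (k : ℂ))) * C (2*ℓ + 1) 3
            = -((k : ℂ) - ℓ + 2*lam) * (ε * C (2*ℓ) 3 + ((k : ℂ) - ℓ) * C (2*ℓ - 1) 3))) := by
  have h := (existsUnique_congr (isTwoStepSolution_iff (ε := ε) hk hres)).mp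
    (existsUnique_isTwoStepSolution (2 * k) ![1, 0, 0, 1] (step k lam mu ε))
  simpa only [SolvesRecurrences, funext_iff, Fin.forall_fin_four, and_assoc, Pi.mul_apply,
    Pi.smul_apply, smul_eq_mul, evenCoeff, evenRhs, oddRhs, pivot, Matrix.cons_val_zero,
    Matrix.cons_val_one, Matrix.cons_val_two, Matrix.cons_val_three, Matrix.head_cons,
    Matrix.tail_cons] using h

/-- if `2(μ-λ) ∉ ℕ`, the system of eight families of recurrences with
the prescribed leading coefficients `C_{0,1} = C_{0,4} = 1`, `C_{0,2} = C_{0,3} = 0`,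
`C_{-1,i} = 0` admits exactly one solution `(C_{m,i})` (supported in `-1 ≤ m ≤ 2k`). -/
theorem stmt15 (k : ℕ) (hk : 1 ≤ k) (lam mu : ℂ)
    (hres : ∀ n : ℕ, 2*(mu - lam) ≠ (n : ℂ)) (ε : ℂ) (hε : ε = 1 ∨ ε = -1) :
    ∃! C : ℤ → Fin 4 → ℂ,
      (∀ m : ℤ, (m < -1 ∨ 2*(k : ℤ) < m) → ∀ i : Fin 4, C m i = 0) ∧
      C 0 0 = 1 ∧ C 0 3 = 1 ∧ C 0 1 = 0 ∧ C 0 2 = 0 ∧ (∀ i : Fin 4, C (-1) i = 0) ∧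
      (∀ ℓ : ℕ, ℓ ≤ k →
        ((ℓ : ℂ) * ((ℓ : ℂ) - 1 + 2*(mu - lam - (k : ℂ))) * C (2*ℓ) 0
            = -(((k : ℂ) - ℓ + 1) * ((k : ℂ) - ℓ + 2*lam)) * C (2*ℓ - 2) 0 ∧
         ((ℓ : ℂ) + 1) * ((ℓ : ℂ) + 2*(mu - lam - (k : ℂ))) * C (2*ℓ) 1
            = ((k : ℂ) - ℓ + 2*lam) *
                (ε * (C (2*ℓ - 1) 1 - C (2*ℓ - 1) 3) - ((k : ℂ) - ℓ + 1) * C (2*ℓ - 2) 1) ∧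
         ((ℓ : ℂ) + 1) * ((ℓ : ℂ) + 2*(mu - lam - (k : ℂ))) * C (2*ℓ) 2
            = -((k : ℂ) - ℓ) *
                (ε * (C (2*ℓ - 1) 0 + C (2*ℓ - 1) 2) + ((k : ℂ) - ℓ + 2*lam + 1) * C (2*ℓ - 2) 2) ∧
         (ℓ : ℂ) * ((ℓ : ℂ) - 1 + 2*(mu - lam - (k : ℂ))) * C (2*ℓ) 3
            = -(((k : ℂ) - ℓ) * ((k : ℂ) - ℓ + 2*lam + 1)) * C (2*ℓ - 2) 3 ∧
         ((ℓ : ℂ) + 1) * ((ℓ : ℂ) + 2*(mu - lam - (k : ℂ))) * C (2*ℓ + 1) 0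
            = ((k : ℂ) - ℓ) * (ε * C (2*ℓ) 0 - ((k : ℂ) - ℓ + 2*lam) * C (2*ℓ - 1) 0) ∧
         ((ℓ : ℂ) + 1) * ((ℓ : ℂ) + 2*(mu - lam - (k : ℂ))) * C (2*ℓ + 1) 1
            = ((k : ℂ) - ℓ + 2*lam) * (ε * C (2*ℓ) 3 - ((k : ℂ) - ℓ) * C (2*ℓ - 1) 1) ∧
         ((ℓ : ℂ) + 1) * ((ℓ : ℂ) + 2*(mu - lam - (k : ℂ))) * C (2*ℓ + 1) 2
            = ((k : ℂ) - ℓ) * (ε * C (2*ℓ) 0 - ((k : ℂ) - ℓ + 2*lam) * C (2*ℓ - 1) 2) ∧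
         ((ℓ : ℂ) + 1) * ((ℓ : ℂ) + 2*(mu - lam - (k : ℂ))) * C (2*ℓ + 1) 3
            = -((k : ℂ) - ℓ + 2*lam) * (ε * C (2*ℓ) 3 + ((k : ℂ) - ℓ) * C (2*ℓ - 1) 3))) :=
  stmt15_general k hk lam mu hres ε

end Gr
end
end
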